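/- Let G and H be topological groups acting continuously, freely, properly and transitively on a nonempty locally compact Hausdorff space P, with G acting on the left, H acting on the right, and the two actions commuting. Fix x ∈ P. Then the map φₓ : G → H, where φₓ(g) is the unique h ∈ H with g • x = x • h, is an isomorphism of topological groups, i.e. a group isomorphism that is also a homeomorphism. -/

import Mathlib

/-!
A proper map is closed, so the orbit map `g ↦ g • x` of a free, transitive, proper action is a
continuous closed bijection, i.e. a homeomorphism `G ≃ₜ P`; likewise `h ↦ x • h` is a
homeomorphism `H ≃ₜ P`, onto because `x • φₓ(g) = g • x`. By definition `φₓ` is the first of these followed by the inverse of the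
second, hence a homeomorphism, and commutation of the two actions makes it multiplicative:
`x • φₓ(g₁g₂) = g₁ • (g₂ • x) = g₁ • (x • φₓ(g₂)) = x • φₓ(g₁) φₓ(g₂)`.
-/

open Function MulOpposite Topology

theorem IsHomeomorph.of_comp {X Y Z : Type*} [TopologicalSpace X] [TopologicalSpace Y]
    [TopologicalSpace Z] {f : X → Y} {g : Y → Z} (hg : IsHomeomorph g)
    (hgf : IsHomeomorph (g ∘ f)) : IsHomeomorph f := by
  let e := hg.homeomorph g
  have hf : f = e.symm ∘ (g ∘ f) := funext fun x => (e.symm_apply_apply (f x)).symm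
  rw [hf]
  exact e.symm.isHomeomorph.comp hgf

theorem injective_smul_const {G X : Type*} [Group G] [MulAction G X] {x : X}
    (hx : ∀ g : G, g • x = x → g = 1) : Injective fun g : G => g • x :=
  fun a b (hab : a • x = b • x) =>
  (inv_mul_eq_one.mp (hx (b⁻¹ * a) (by rw [mul_smul, hab, inv_smul_smul]))).symm

section ProperPairMap

variable {G X : Type*} [TopologicalSpace G] [TopologicalSpace X] [T1Space X] {a : G → X → X}

theorem IsProperMap.apply_const (ha : IsProperMap fun gp : G × X => (a gp.1 gp.2, gp.2))
    (x : X) : IsProperMap fun g => a g x := by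
  have hx : IsClosedEmbedding fun g : G => (g, x) := by
    refine ⟨isEmbedding_prodMkLeft x, ?_⟩
    rw [← Set.image_univ, ← Set.prod_singleton]
    exact isClosed_univ.prod isClosed_singleton
  exact isProperMap_of_comp_of_inj (g := fun y : X => (y, x))
    ((continuous_fst.comp ha.continuous).comp (.prodMk_left x)) (.prodMk_left x)
    (ha.comp hx.isProperMap) (fun y z h => congrArg Prod.fst h)

theorem IsProperMap.isHomeomorph_apply_const
    (ha : IsProperMap fun gp : G × X => (a gp.1 gp.2, gp.2)) (x : X)
    (hbij : Bijective fun g => a g x) : IsHomeomorph fun g => a g x :=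
  let hx := ha.apply_const x
  isHomeomorph_iff_continuous_isClosedMap_bijective.2 ⟨hx.continuous, hx.isClosedMap, hbij⟩

end ProperPairMap

theorem stmt3_general {G H P : Type*}
    [Group G] [TopologicalSpace G]
    [Group H] [TopologicalSpace H]
    [TopologicalSpace P] [T2Space P]
    [MulAction G P]
    [MulAction Hᵐᵒᵖ P]
    (hcomm : ∀ (g : G) (h : H) (p : P),
      MulOpposite.op h • (g • p) = g • (MulOpposite.op h • p))
    (hGfree : ∀ (g : G) (p : P), g • p = p → g = 1)
    (hGtrans : ∀ p q : P, ∃ g : G, g • p = q)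
    (hGproper : IsProperMap (fun gp : G × P => (gp.1 • gp.2, gp.2)))
    (hHfree : ∀ (h : H) (p : P), MulOpposite.op h • p = p → h = 1)
    (hHproper : IsProperMap (fun hp : H × P => (MulOpposite.op hp.1 • hp.2, hp.2)))
    (x : P) (φ : G → H)
    (hφ : ∀ g : G, g • x = MulOpposite.op (φ g) • x) :
    (∀ g₁ g₂ : G, φ (g₁ * g₂) = φ g₁ * φ g₂) ∧ IsHomeomorph φ := by
  have hφx : (fun g : G => g • x) = (fun h : H => op h • x) ∘ φ := funext hφ
  have hGorb : IsHomeomorph fun g : G => g • x :=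
    hGproper.isHomeomorph_apply_const x ⟨injective_smul_const (hGfree · x), hGtrans x⟩
  have hHinj : Injective fun h : H => op h • x :=
    (injective_smul_const (G := Hᵐᵒᵖ) fun h hh => unop_injective (hHfree h.unop x hh)).comp
      op_injective
  have hHorb : IsHomeomorph fun h : H => op h • x :=
    hHproper.isHomeomorph_apply_const x ⟨hHinj, .of_comp (hφx ▸ hGorb.surjective)⟩
  refine ⟨fun g₁ g₂ => hHinj ?_, hHorb.of_comp (hφx ▸ hGorb)⟩
  change op (φ (g₁ * g₂)) • x = op (φ g₁ * φ g₂) • x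
  rw [← hφ, op_mul, mul_smul, mul_smul, ← hφ g₁, hcomm, ← hφ g₂]

/-- If topological groups `G` and `H` act continuously, freely, properly and transitively
on a nonempty locally compact Hausdorff space `P` (on the left and right respectively,
the right action encoded via `Hᵐᵒᵖ`), the actions commute, `x ∈ P`, and `φ : G → H`
satisfies `g • x = x • φ g` for all `g`, then `φ` is an isomorphism of topological groups:
a group homomorphism (hence isomorphism) which is also a homeomorphism. -/
theorem stmt3 {G H P : Type*}
    [Group G] [TopologicalSpace G] [IsTopologicalGroup G]
    [Group H] [TopologicalSpace H] [IsTopologicalGroup H]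
    [TopologicalSpace P] [LocallyCompactSpace P] [T2Space P] [Nonempty P]
    [MulAction G P] [ContinuousSMul G P]
    [MulAction Hᵐᵒᵖ P] [ContinuousSMul Hᵐᵒᵖ P]
    (hcomm : ∀ (g : G) (h : H) (p : P),
      MulOpposite.op h • (g • p) = g • (MulOpposite.op h • p))
    (hGfree : ∀ (g : G) (p : P), g • p = p → g = 1)
    (hGtrans : ∀ p q : P, ∃ g : G, g • p = q)
    (hGproper : IsProperMap (fun gp : G × P => (gp.1 • gp.2, gp.2)))
    (hHfree : ∀ (h : H) (p : P), MulOpposite.op h • p = p → h = 1)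
    (hHtrans : ∀ p q : P, ∃ h : H, MulOpposite.op h • p = q)
    (hHproper : IsProperMap (fun hp : H × P => (MulOpposite.op hp.1 • hp.2, hp.2)))
    (x : P) (φ : G → H)
    (hφ : ∀ g : G, g • x = MulOpposite.op (φ g) • x) :
    (∀ g₁ g₂ : G, φ (g₁ * g₂) = φ g₁ * φ g₂) ∧ IsHomeomorph φ :=
  stmt3_general hcomm hGfree hGtrans hGproper hHfree hHproper x φ hφ
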